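/- Direct competition reduction effect: let (i₀,j₀) be an arc of Γ with δ⁻(j₀) ≥ 2, and let i_k ≠ i₀ be another immediate predecessor of j₀ that is not a predecessor in Γ of any immediate predecessor of j₀. If v is superadditive, then AF_{i_k}(N,v,Γ) ≤ AF_{i_k}(N,v,Γ−(i₀,j₀)). -/

import Mathlib

/-!
In a circuit-free digraph the maximal spanning forests are exactly the arc sets that choose one
incoming arc for every node having one. They therefore factor as a choice of parent for `j₀`
times a maximal spanning forest of the arcs not entering `j₀`, and deleting `(i₀, j₀)` removes
one value of the first factor. Since `iₖ` reaches no parent of `j₀`, its marginal contribution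
does not depend on which parent `i ≠ iₖ` is chosen, and by superadditivity it is at least as
large when `iₖ` itself is chosen. So, with `d = δ⁻(j₀)`, for each forest of the other arcs
`AF_{iₖ}` averages one large value with `d - 1` equal baseline values before the deletion and
with `d - 2` after it, and dropping a baseline value can only raise the average.
-/

open scoped Classical
open Finset

section Preamble

variable {V : Type*} [Fintype V] [DecidableEq V]

/-- Adjacency relation of a digraph given by its arc set. -/
def Adj (A : Finset (V × V)) (i j : V) : Prop := (i, j) ∈ A

/-- A digraph is circuit-free if it contains no directed cycle. -/
def CircuitFree (A : Finset (V × V)) : Prop :=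
  ∀ i : V, ¬ Relation.TransGen (Adj A) i i

/-- In-degree of a node. -/
def inDeg (A : Finset (V × V)) (j : V) : ℕ :=
  (A.filter (fun a => a.2 = j)).card

/-- Weak connectivity (chains, ignoring orientation). -/
def WConn (A : Finset (V × V)) (i j : V) : Prop :=
  Relation.ReflTransGen (fun a b => (a, b) ∈ A ∨ (b, a) ∈ A) i j

/-- The weakly connected component of `i`, as a finset. -/
noncomputable def compF (A : Finset (V × V)) (i : V) : Finset V :=
  Finset.univ.filter (fun j => WConn A i j)

/-- `IsPath A p` : `p` is a (nonempty) directed path along arcs of `A`. -/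
def IsPath (A : Finset (V × V)) : List V → Prop
  | [] => False
  | [_] => True
  | i :: j :: l => (i, j) ∈ A ∧ IsPath A (j :: l)

/-- The digraph `A` restricted to the node set `K` is an arborescence:
there is a root `r ∈ K` with a unique directed path from `r` to every node of `K`. -/
def IsArbOn (A : Finset (V × V)) (K : Set V) : Prop :=
  ∃ r ∈ K, ∀ i ∈ K, ∃! p : List V,
    IsPath A p ∧ p.head? = some r ∧ p.getLast? = some i

/-- A forest: every weakly connected component is an arborescence. -/
def IsForest (A : Finset (V × V)) : Prop :=
  ∀ i : V, IsArbOn A {j | WConn A i j}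

/-- `F` is a maximal spanning forest of the digraph `A`. -/
def IsMaxSpanningForest (A F : Finset (V × V)) : Prop :=
  F ⊆ A ∧ IsForest F ∧ ∀ a ∈ A, a ∉ F → ¬ IsForest (insert a F)

/-- The collection of all maximal spanning forests of `A`. -/
noncomputable def maxForests (A : Finset (V × V)) : Finset (Finset (V × V)) :=
  A.powerset.filter (fun F => IsMaxSpanningForest A F)

/-- `S̄_F(i)` : the node `i` together with all its successors in `F`. -/
noncomputable def succSet (F : Finset (V × V)) (i : V) : Finset V :=
  Finset.univ.filter (fun j => Relation.ReflTransGen (Adj F) i j)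

/-- `Ŝ_F(i)` : the immediate successors of `i` in `F`. -/
noncomputable def immSucc (F : Finset (V × V)) (i : V) : Finset V :=
  Finset.univ.filter (fun j => (i, j) ∈ F)

/-- Marginal contribution of player `i` with respect to the forest `F`. -/
noncomputable def marg (v : Finset V → ℝ) (F : Finset (V × V)) (i : V) : ℝ :=
  v (succSet F i) - ∑ j ∈ immSucc F i, v (succSet F j)

/-- The Average Forest leadership measure. -/
noncomputable def AF (v : Finset V → ℝ) (A : Finset (V × V)) (i : V) : ℝ :=
  (∑ F ∈ maxForests A, marg v F i) / (maxForests A).card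

/-- The node sets of the arborescence components of a forest `F`. -/
noncomputable def comps (F : Finset (V × V)) : Finset (Finset V) :=
  Finset.univ.image (fun i => compF F i)

/-- Productivity of the organisational situation. -/
noncomputable def Productivity (v : Finset V → ℝ) (A : Finset (V × V)) : ℝ :=
  (∑ F ∈ maxForests A, ∑ K ∈ comps F, v K) / (maxForests A).card

/-- Superadditivity of a TU game. -/
def Superadditive (v : Finset V → ℝ) : Prop :=
  ∀ S Q : Finset V, Disjoint S Q → v S + v Q ≤ v (S ∪ Q)

/-- Weak connectedness of the digraph. -/
def WeaklyConnected (A : Finset (V × V)) : Prop :=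
  ∀ i j : V, WConn A i j

/-- Quasi-strong connectedness: existence of a root reaching every node. -/
def HasRoot (A : Finset (V × V)) : Prop :=
  ∃ r : V, ∀ i : V, Relation.ReflTransGen (Adj A) r i

end Preamble

open Relation

section Forests

variable {V : Type*}

def UniqueParents (F : Finset (V × V)) : Prop :=
  ∀ ⦃a b j : V⦄, (a, j) ∈ F → (b, j) ∈ F → a = b

theorem CircuitFree.mono {A F : Finset (V × V)} (hA : CircuitFree A) (hFA : F ⊆ A) :
    CircuitFree F := fun i hi => hA i (TransGen.mono (fun _ _ h => hFA h) _ _ hi)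

theorem isPath_iff_isChain {F : Finset (V × V)} {p : List V} :
    IsPath F p ↔ p ≠ [] ∧ p.IsChain (Adj F) := by
  induction p with
  | nil => simp [IsPath]
  | cons a q ih =>
    cases q with
    | nil => simp [IsPath]
    | cons b r => simp [IsPath, ih, Adj]

theorem IsForest.uniqueParents {F : Finset (V × V)} (hF : IsForest F) : UniqueParents F := by
  intro a b j haj hbj
  obtain ⟨r, -, hr⟩ := hF j
  have hpath : ∀ {c}, (c, j) ∈ F → ∃ p, IsPath F (p ++ [c, j]) ∧ (p ++ [c, j]).head? = some r := by
    intro c hcj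
    obtain ⟨p, ⟨hp, hph, hpl⟩, -⟩ := hr c (.single (Or.inr hcj))
    obtain ⟨p', rfl⟩ : ∃ p', p = p' ++ [c] := by
      obtain ⟨p', x, rfl⟩ := (List.eq_nil_or_concat' p).resolve_left (isPath_iff_isChain.1 hp).1
      exact ⟨p', by simpa using hpl⟩
    refine ⟨p', ?_, ?_⟩
    · rw [isPath_iff_isChain] at hp ⊢
      refine ⟨by simp, ?_⟩
      have := List.isChain_append.2 ⟨hp.2, List.isChain_singleton j, by simpa [Adj] using hcj⟩
      simpa using this
    · cases p' <;> simpa using hph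
  obtain ⟨p, hp, hph⟩ := hpath haj
  obtain ⟨q, hq, hqh⟩ := hpath hbj
  have hpq : p ++ [a, j] = q ++ [b, j] :=
    (hr j .refl).unique ⟨hp, hph, by simp⟩ ⟨hq, hqh, by simp⟩
  have := congrArg (fun l => l.reverse.tail.head?) hpq
  simpa using this

theorem UniqueParents.reflTransGen_total {F : Finset (V × V)} (hF : UniqueParents F)
    {a b x : V} (ha : ReflTransGen (Adj F) a x) (hb : ReflTransGen (Adj F) b x) :
    ReflTransGen (Adj F) a b ∨ ReflTransGen (Adj F) b a := by
  induction hb generalizing a with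
  | refl => exact Or.inl ha
  | @tail y x hby hyx ih =>
    rcases ha.cases_tail with rfl | ⟨z, haz, hzx⟩
    · exact Or.inr (hby.tail hyx)
    · exact ih (hF hzx hyx ▸ haz)

def IsSource (F : Finset (V × V)) (r : V) : Prop := ∀ a, (a, r) ∉ F

theorem IsSource.eq_of_reflTransGen {F : Finset (V × V)} {a r : V} (hr : IsSource F r)
    (h : ReflTransGen (Adj F) a r) : a = r := by
  rcases h.cases_tail with rfl | ⟨c, -, hc⟩
  · rfl
  · exact (hr c hc).elim

theorem UniqueParents.insert [DecidableEq V] {F : Finset (V × V)} {i j : V}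
    (hF : UniqueParents F) (hj : IsSource F j) : UniqueParents (insert (i, j) F) := by
  intro a b k ha hb
  rcases mem_insert.1 ha with ha | ha <;> rcases mem_insert.1 hb with hb | hb
  · simp_all
  · simp only [Prod.mk.injEq] at ha; exact (hj b (ha.2 ▸ hb)).elim
  · simp only [Prod.mk.injEq] at hb; exact (hj a (hb.2 ▸ ha)).elim
  · exact hF ha hb

theorem reflTransGen_insert [DecidableEq V] {G : Finset (V × V)} {i j s x : V}
    (h : ReflTransGen (Adj (insert (i, j) G)) s x) :
    ReflTransGen (Adj G) s x ∨ ReflTransGen (Adj G) j x := by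
  induction h with
  | refl => exact Or.inl .refl
  | tail _ hyz ih =>
    rcases mem_insert.1 hyz with he | hyz
    · exact Or.inr ((Prod.mk.inj he).2 ▸ .refl)
    · exact ih.imp (·.tail hyz) (·.tail hyz)

theorem CircuitFree.exists_source_reflTransGen [Finite V] {F : Finset (V × V)}
    (hF : CircuitFree F) (j : V) : ∃ r, IsSource F r ∧ ReflTransGen (Adj F) r j := by
  have : Std.Irrefl (TransGen (Adj F)) := ⟨hF⟩
  have hwf : WellFounded (Adj F) :=
    Subrelation.wf TransGen.single (Finite.wellFounded_of_trans_of_irrefl _)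
  obtain ⟨r, hr, hmin⟩ := hwf.has_min {r | ReflTransGen (Adj F) r j} ⟨j, .refl⟩
  exact ⟨r, fun a ha => hmin a (ReflTransGen.head ha hr) ha, hr⟩

theorem UniqueParents.reflTransGen_of_wConn {F : Finset (V × V)} {r i j : V}
    (hF : UniqueParents F) (hr : IsSource F r) (hri : ReflTransGen (Adj F) r i)
    (hij : WConn F i j) : ReflTransGen (Adj F) r j := by
  induction hij with
  | refl => exact hri
  | tail _ hbc ih =>
    rcases hbc with hbc | hcb
    · exact ih.tail hbc
    · rcases hF.reflTransGen_total ih (.single hcb) with hrc | hcr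
      · exact hrc
      · exact hr.eq_of_reflTransGen hcr ▸ .refl

/-- Read backwards from its last node, a path is determined by the unique parents. -/
theorem UniqueParents.eq_of_isChain_reverse {F : Finset (V × V)} {r : V}
    (hF : UniqueParents F) (hr : IsSource F r) :
    ∀ {j : V} {p q : List V}, (j :: p).IsChain (fun a b => Adj F b a) →
      (j :: q).IsChain (fun a b => Adj F b a) → (j :: p).getLast? = some r →
      (j :: q).getLast? = some r → p = q
  | j, [], [], _, _, _, _ => rfl
  | j, [], b :: q, _, hq, hpr, _ => by
    simp only [List.getLast?_singleton, Option.some.injEq] at hpr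
    exact (hr b (hpr ▸ (List.isChain_cons_cons.1 hq).1)).elim
  | j, a :: p, [], hp, _, _, hqr => by
    simp only [List.getLast?_singleton, Option.some.injEq] at hqr
    exact (hr a (hqr ▸ (List.isChain_cons_cons.1 hp).1)).elim
  | j, a :: p, b :: q, hp, hq, hpr, hqr => by
    rw [List.isChain_cons_cons] at hp hq
    obtain rfl := hF hp.1 hq.1
    rw [List.getLast?_cons_cons] at hpr hqr
    rw [hF.eq_of_isChain_reverse hr hp.2 hq.2 hpr hqr]

theorem UniqueParents.isPath_unique {F : Finset (V × V)} {r : V} {p q : List V}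
    (hF : UniqueParents F) (hr : IsSource F r) (hp : IsPath F p) (hq : IsPath F q)
    (hph : p.head? = some r) (hqh : q.head? = some r) (hpq : p.getLast? = q.getLast?) :
    p = q := by
  rw [isPath_iff_isChain, ← List.reverse_reverse p, List.isChain_reverse] at hp
  rw [isPath_iff_isChain, ← List.reverse_reverse q, List.isChain_reverse] at hq
  rw [← List.getLast?_reverse] at hph hqh
  rw [← List.head?_reverse, ← List.head?_reverse (l := q)] at hpq
  rw [← List.reverse_inj]
  generalize p.reverse = p' at *
  generalize q.reverse = q' at *
  match p', q', hp, hq with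
  | [], _, hp, _ => exact absurd rfl hp.1
  | _, [], _, hq => exact absurd rfl hq.1
  | j :: p', k :: q', hp, hq =>
    obtain rfl : j = k := by simpa using hpq
    rw [hF.eq_of_isChain_reverse hr hp.2 hq.2 hph hqh]

theorem CircuitFree.isForest [Finite V] {F : Finset (V × V)} (hF : CircuitFree F)
    (hu : UniqueParents F) : IsForest F := by
  intro i
  obtain ⟨r, hr, hri⟩ := hF.exists_source_reflTransGen i
  refine ⟨r, ReflTransGen.mono (fun _ _ h => Or.inr h) _ _ hri.swap, fun j hj => ?_⟩
  obtain ⟨l, hl, hlast⟩ :=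
    List.exists_isChain_cons_of_relationReflTransGen (hu.reflTransGen_of_wConn hr hri hj)
  have hpath : IsPath F (r :: l) := isPath_iff_isChain.2 ⟨List.cons_ne_nil _ _, hl⟩
  have hlast' : (r :: l).getLast? = some j := by
    rw [List.getLast?_eq_some_getLast (List.cons_ne_nil _ _), hlast]
  refine ⟨r :: l, ⟨hpath, rfl, hlast'⟩, fun q ⟨hq, hqh, hql⟩ => ?_⟩
  exact hu.isPath_unique hr hq hpath hqh rfl (hql.trans hlast'.symm)

theorem mem_maxForests_iff [DecidableEq V] [Finite V] {A F : Finset (V × V)}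
    (hA : CircuitFree A) :
    F ∈ maxForests A ↔
      F ⊆ A ∧ UniqueParents F ∧ ∀ ⦃i j : V⦄, (i, j) ∈ A → ∃ b, (b, j) ∈ F := by
  rw [maxForests, mem_filter, mem_powerset, IsMaxSpanningForest]
  constructor
  · rintro ⟨hFA, -, hF, hmax⟩
    refine ⟨hFA, hF.uniqueParents, fun i j hij => ?_⟩
    by_contra! hj
    exact hmax (i, j) hij (hj i)
      ((hA.mono (insert_subset hij hFA)).isForest (hF.uniqueParents.insert hj))
  · rintro ⟨hFA, hu, hcov⟩
    refine ⟨hFA, hFA, (hA.mono hFA).isForest hu, fun ⟨i, j⟩ hij hnot hF' => ?_⟩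
    obtain ⟨b, hb⟩ := hcov hij
    exact hnot (hF'.uniqueParents (mem_insert_self _ _) (mem_insert_of_mem hb) ▸ hb)

end Forests

section Decomposition

variable {V : Type*} [DecidableEq V]

def preds [Fintype V] (A : Finset (V × V)) (j : V) : Finset V :=
  univ.filter fun i => (i, j) ∈ A

theorem mem_preds [Fintype V] {A : Finset (V × V)} {i j : V} : i ∈ preds A j ↔ (i, j) ∈ A := by
  simp [preds]

theorem preds_erase [Fintype V] (A : Finset (V × V)) (i j : V) :
    preds (A.erase (i, j)) j = (preds A j).erase i := by
  ext
  simp [preds, and_comm]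

theorem filter_snd_ne_erase (A : Finset (V × V)) (i j : V) :
    (A.erase (i, j)).filter (·.2 ≠ j) = A.filter (·.2 ≠ j) := by
  ext ⟨x, y⟩
  simp only [mem_filter, mem_erase]
  grind

theorem mem_maxForests_filter_snd_ne [Finite V] {A G : Finset (V × V)} {j : V}
    (hA : CircuitFree A) (hG : G ∈ maxForests (A.filter (·.2 ≠ j))) :
    G ⊆ A ∧ UniqueParents G ∧ IsSource G j := by
  obtain ⟨hGA, hu, -⟩ := (mem_maxForests_iff (hA.mono (filter_subset _ _))).1 hG
  exact ⟨hGA.trans (filter_subset _ _), hu, fun a ha => (mem_filter.1 (hGA ha)).2 rfl⟩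

theorem insert_injOn (j : V) :
    Set.InjOn (fun x : V × Finset (V × V) => insert (x.1, j) x.2) {x | ∀ a ∈ x.2, a.2 ≠ j} := by
  rintro ⟨i, G⟩ hG ⟨i', G'⟩ hG' h
  simp only [Set.mem_ofPred_eq] at hG hG' h
  have hGG' : G = G' := by
    have := congrArg (filter fun a : V × V => a.2 ≠ j) h
    simpa [filter_insert, filter_true_of_mem hG, filter_true_of_mem hG'] using this
  subst hGG'
  have hi : (i, j) ∈ insert (i', j) G := h ▸ mem_insert_self _ _
  rcases mem_insert.1 hi with hii' | hiG
  · simp_all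
  · exact absurd rfl (hG _ hiG)

variable [Fintype V]

theorem maxForests_eq_image {A : Finset (V × V)} {j : V} (hA : CircuitFree A)
    (hj : (preds A j).Nonempty) :
    maxForests A = (preds A j ×ˢ maxForests (A.filter (·.2 ≠ j))).image
      fun x => insert (x.1, j) x.2 := by
  ext F
  simp only [mem_image, mem_product, Prod.exists, mem_preds, mem_maxForests_iff hA,
    mem_maxForests_iff (hA.mono (filter_subset _ _)), mem_filter]
  constructor
  · rintro ⟨hFA, hu, hcov⟩
    obtain ⟨b, hb⟩ := hcov (mem_preds.1 hj.choose_spec)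
    refine ⟨b, F.filter (·.2 ≠ j), ⟨hFA hb, filter_subset_filter _ hFA,
      fun _ _ _ ha hb => hu (mem_filter.1 ha).1 (mem_filter.1 hb).1,
      fun i k hik => ?_⟩, ?_⟩
    · obtain ⟨c, hc⟩ := hcov hik.1
      exact ⟨c, mem_filter.2 ⟨hc, hik.2⟩⟩
    · ext ⟨x, y⟩
      by_cases hy : y = j
      · subst hy
        simpa using ⟨fun h => h ▸ hb, fun hx => hu hx hb⟩
      · simp [hy]
  · rintro ⟨i, G, ⟨hi, hGA, hu, hcov⟩, rfl⟩
    have hjG : IsSource G j := fun a ha => (mem_filter.1 (hGA ha)).2 rfl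
    refine ⟨insert_subset hi (hGA.trans (filter_subset _ _)), hu.insert hjG,
      fun i' k hik => ?_⟩
    by_cases hk : k = j
    · exact ⟨i, hk ▸ mem_insert_self _ _⟩
    · obtain ⟨c, hc⟩ := hcov ⟨hik, hk⟩
      exact ⟨c, mem_insert_of_mem hc⟩

theorem AF_eq_average_product {A : Finset (V × V)} {j : V} (hA : CircuitFree A)
    (hj : (preds A j).Nonempty) (v : Finset V → ℝ) (k : V) :
    AF v A k =
      (∑ x ∈ preds A j ×ˢ maxForests (A.filter (·.2 ≠ j)), marg v (insert (x.1, j) x.2) k) /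
        ((preds A j).card * (maxForests (A.filter (·.2 ≠ j))).card) := by
  have hinj : Set.InjOn (fun x : V × Finset (V × V) => insert (x.1, j) x.2)
      ↑(preds A j ×ˢ maxForests (A.filter (·.2 ≠ j))) := by
    refine (insert_injOn j).mono ?_
    rintro ⟨i, G⟩ hx ⟨a, b⟩ ha rfl
    exact (mem_maxForests_filter_snd_ne hA (mem_product.1 hx).2).2.2 a ha
  rw [AF, maxForests_eq_image hA hj, sum_image hinj, card_image_of_injOn hinj,
    card_product, Nat.cast_mul]

end Decomposition

section Marginal

variable {V : Type*} [Fintype V] [DecidableEq V]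

theorem succSet_insert_of_not_reflTransGen {G : Finset (V × V)} {i j s : V}
    (h : ¬ ReflTransGen (Adj G) s i) : succSet (insert (i, j) G) s = succSet G s := by
  ext x
  simp only [succSet, mem_filter, mem_univ, true_and]
  refine ⟨fun hx => ?_, ReflTransGen.mono (fun _ _ => mem_insert_of_mem) _ _⟩
  induction hx with
  | refl => exact .refl
  | tail _ hyz ih =>
    rcases mem_insert.1 hyz with he | hyz
    · exact absurd ((Prod.mk.inj he).1 ▸ ih) h
    · exact ih.tail hyz

theorem marg_insert_of_not_reflTransGen {G : Finset (V × V)} {i j k : V}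
    (h : ¬ ReflTransGen (Adj G) k i) (v : Finset V → ℝ) :
    marg v (insert (i, j) G) k = marg v G k := by
  have hki : k ≠ i := fun hki => h (hki ▸ .refl)
  have himm : immSucc (insert (i, j) G) k = immSucc G k := by
    ext c
    simp [immSucc, hki]
  have hchild : ∀ c ∈ immSucc G k, succSet (insert (i, j) G) c = succSet G c := by
    intro c hc
    refine succSet_insert_of_not_reflTransGen fun hci => h (.head ?_ hci)
    simpa [immSucc, Adj] using hc
  rw [marg, marg, succSet_insert_of_not_reflTransGen h, himm, sum_congr rfl fun c hc => by
    rw [hchild c hc]]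

/-- Attaching `j`'s tree below `k` merges two disjoint successor sets, which superadditivity
rewards. -/
theorem marg_le_marg_insert_self {G : Finset (V × V)} {j k : V} {v : Finset V → ℝ}
    (hsa : Superadditive v) (hcf : CircuitFree (insert (k, j) G)) (hu : UniqueParents G)
    (hj : IsSource G j) : marg v G k ≤ marg v (insert (k, j) G) k := by
  have hkj : Adj (insert (k, j) G) k j := mem_insert_self _ _
  have hG : ∀ {a b}, ReflTransGen (Adj G) a b → ReflTransGen (Adj (insert (k, j) G)) a b :=
    ReflTransGen.mono (fun _ _ => mem_insert_of_mem) _ _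
  have hjk : ¬ ReflTransGen (Adj G) j k := fun h => hcf k (.head' hkj (hG h))
  have hne : k ≠ j := fun h => hcf k (.single (h ▸ hkj))
  have hsucc : succSet (insert (k, j) G) k = succSet G k ∪ succSet G j := by
    ext x
    simp only [succSet, mem_filter, mem_univ, true_and, mem_union]
    exact ⟨reflTransGen_insert, fun h => h.elim hG fun h => .head hkj (hG h)⟩
  have hdisj : Disjoint (succSet G k) (succSet G j) := by
    refine disjoint_left.2 fun x hkx hjx => ?_
    simp only [succSet, mem_filter, mem_univ, true_and] at hkx hjx
    rcases hu.reflTransGen_total hkx hjx with h | h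
    · exact hne (hj.eq_of_reflTransGen h)
    · exact hjk h
  have himm : immSucc (insert (k, j) G) k = insert j (immSucc G k) := by
    ext c
    simp [immSucc]
  have hjimm : j ∉ immSucc G k := by simpa [immSucc] using hj k
  have hchildren : ∑ c ∈ immSucc G k, v (succSet (insert (k, j) G) c) =
      ∑ c ∈ immSucc G k, v (succSet G c) := by
    refine sum_congr rfl fun c hc => congrArg v ?_
    refine succSet_insert_of_not_reflTransGen fun hck => hcf k (.head' ?_ (hG hck))
    exact mem_insert_of_mem (by simpa [immSucc] using hc)
  rw [marg, marg, hsucc, himm, sum_insert hjimm, succSet_insert_of_not_reflTransGen hjk,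
    hchildren]
  linarith [hsa _ _ hdisj]

end Marginal

section Averaging

variable {ι β : Type*} [DecidableEq ι]

theorem sum_product_eq_of_eq_off {s : Finset ι} {B : Finset β} {k : ι} (hk : k ∈ s)
    {g : ι → β → ℝ} {m : β → ℝ} (hg : ∀ i ∈ s, i ≠ k → ∀ b ∈ B, g i b = m b) :
    ∑ x ∈ s ×ˢ B, g x.1 x.2 = ∑ b ∈ B, g k b + ((s.card : ℝ) - 1) * ∑ b ∈ B, m b := by
  rw [sum_product, ← add_sum_erase _ _ hk, sum_congr rfl fun i hi =>
    sum_congr rfl (hg i (mem_of_mem_erase hi) (ne_of_mem_erase hi)),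
    sum_const, nsmul_eq_mul, card_erase_of_mem hk,
    Nat.cast_pred (card_pos.2 ⟨k, hk⟩)]

theorem average_product_le_average_erase {s : Finset ι} {B : Finset β} {k i₀ : ι}
    (hk : k ∈ s) (hi₀ : i₀ ∈ s) (hne : k ≠ i₀) {g : ι → β → ℝ} {m : β → ℝ}
    (hg : ∀ i ∈ s, i ≠ k → ∀ b ∈ B, g i b = m b) (hle : ∀ b ∈ B, m b ≤ g k b) :
    (∑ x ∈ s ×ˢ B, g x.1 x.2) / (s.card * B.card) ≤
      (∑ x ∈ s.erase i₀ ×ˢ B, g x.1 x.2) / ((s.erase i₀).card * B.card) := by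
  rw [sum_product_eq_of_eq_off hk hg, sum_product_eq_of_eq_off (mem_erase.2 ⟨hne, hk⟩)
    fun i hi => hg i (mem_of_mem_erase hi), card_erase_of_mem hi₀,
    Nat.cast_pred (card_pos.2 ⟨k, hk⟩)]
  have hs : (2 : ℝ) ≤ s.card := by
    exact_mod_cast one_lt_card.2 ⟨k, hk, i₀, hi₀, hne⟩
  have hmg : ∑ b ∈ B, m b ≤ ∑ b ∈ B, g k b := sum_le_sum hle
  rcases (Nat.cast_nonneg (α := ℝ) B.card).eq_or_lt with hB | hB
  · simp [← hB]
  rw [div_le_div_iff₀ (by positivity) (by nlinarith)]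
  nlinarith [mul_nonneg hB.le (sub_nonneg.2 hmg)]

end Averaging

theorem AF_direct_competition_reduction_general {V : Type*} [Fintype V] [DecidableEq V]
    (A : Finset (V × V)) (hA : CircuitFree A)
    (v : Finset V → ℝ) (hsa : Superadditive v)
    (i₀ j₀ iₖ : V) (ha : (i₀, j₀) ∈ A)
    (hk : (iₖ, j₀) ∈ A) (hne : iₖ ≠ i₀)
    (hpred : ∀ i : V, (i, j₀) ∈ A → ¬ Relation.TransGen (Adj A) iₖ i) :
    AF v A iₖ ≤ AF v (A.erase (i₀, j₀)) iₖ := by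
  have hkA' : iₖ ∈ preds (A.erase (i₀, j₀)) j₀ := by
    rw [preds_erase]
    exact mem_erase.2 ⟨hne, mem_preds.2 hk⟩
  rw [AF_eq_average_product hA ⟨iₖ, mem_preds.2 hk⟩,
    AF_eq_average_product (hA.mono (erase_subset _ _)) ⟨iₖ, hkA'⟩, preds_erase,
    filter_snd_ne_erase]
  refine average_product_le_average_erase (mem_preds.2 hk) (mem_preds.2 ha) hne
    (g := fun i G => marg v (insert (i, j₀) G) iₖ) (m := fun G => marg v G iₖ) ?_ ?_
  · intro i hi hik G hG
    obtain ⟨hGA, -, -⟩ := mem_maxForests_filter_snd_ne hA hG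
    refine marg_insert_of_not_reflTransGen (fun h => ?_) v
    rcases reflTransGen_iff_eq_or_transGen.1 h with rfl | h
    · exact hik rfl
    · exact hpred i (mem_preds.1 hi) (TransGen.mono (fun _ _ h => hGA h) _ _ h)
  · intro G hG
    obtain ⟨hGA, hu, hj⟩ := mem_maxForests_filter_snd_ne hA hG
    exact marg_le_marg_insert_self hsa (hA.mono (insert_subset hk hGA)) hu hj

/-- direct competition reduction effect: if `(i₀, j₀)` is an arc with
`δ⁻(j₀) ≥ 2`, `iₖ ≠ i₀` is another immediate predecessor of `j₀` which is not a
predecessor of any immediate predecessor of `j₀`, and `v` is superadditive, then deleting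
`(i₀, j₀)` does not decrease the AF value of `iₖ`. -/
theorem AF_direct_competition_reduction {V : Type*} [Fintype V] [DecidableEq V]
    (A : Finset (V × V)) (hA : CircuitFree A)
    (v : Finset V → ℝ) (hv0 : v ∅ = 0) (hsa : Superadditive v)
    (i₀ j₀ iₖ : V) (ha : (i₀, j₀) ∈ A) (hdeg : 2 ≤ inDeg A j₀)
    (hk : (iₖ, j₀) ∈ A) (hne : iₖ ≠ i₀)
    (hpred : ∀ i : V, (i, j₀) ∈ A → ¬ Relation.TransGen (Adj A) iₖ i) :
    AF v A iₖ ≤ AF v (A.erase (i₀, j₀)) iₖ :=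
  AF_direct_competition_reduction_general A hA v hsa i₀ j₀ iₖ ha hk hne hpred
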